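/- The formula f · (x_λ)_{λ∈Φ⁺} := ([x_{λ,0} : f(λ)·x_{λ,0} + x_{λ,1}])_{λ∈Φ⁺}, for f ∈ Hom_ℚ(E, ℂ) and any choice of homogeneous coordinates x_λ = [x_{λ,0} : x_{λ,1}], is well defined and gives an action of the additive group Hom_ℚ(E, ℂ) on (ℙ¹)^{Φ⁺}; the set Z is invariant under this action; and two points x, x′ ∈ Z lie in the same orbit if and only if Fin(x) = Fin(x′). In particular, Z has only finitely many orbits, namely the strata C̊(Ψ) := {x ∈ Z : Fin(x) = Ψ ∩ Φ⁺} indexed by the maximal closed root subsystems Ψ of Φ. -/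

import Mathlib

open scoped Classical
noncomputable section

/-- A reduced crystallographic root system spanning `E`. -/
def IsRootSystem {E : Type*} [AddCommGroup E] [Module ℚ E] (Φ : Set E) : Prop :=
  Φ.Finite ∧ (0 : E) ∉ Φ ∧ Submodule.span ℚ Φ = ⊤ ∧ (∀ α ∈ Φ, -α ∈ Φ) ∧
    (∀ α ∈ Φ, ∃ f : E →ₗ[ℚ] ℚ, f α = 2 ∧ (∀ β ∈ Φ, ∃ n : ℤ, f β = (n : ℚ)) ∧
      ∀ β ∈ Φ, β - f β • α ∈ Φ) ∧
    ∀ α ∈ Φ, ∀ c : ℚ, c • α ∈ Φ → c = 1 ∨ c = -1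

/-- Canonical homogeneous coordinates on `ℙ¹ = ℂ ∪ {∞}`. -/
def coordP1 : OnePoint ℂ → ℂ × ℂ :=
  fun x => Option.elim x (0, 1) fun c => (1, c)

/-- Membership in `Z`. -/
def memZ {E : Type*} [AddCommGroup E] [Module ℚ E] (Φpos : Finset E)
    (x : Φpos → OnePoint ℂ) : Prop :=
  ∀ c : Φpos → ℚ, ∑ l : Φpos, c l • (l : E) = 0 →
    ∑ l ∈ Finset.univ.filter fun l : Φpos => c l ≠ 0,
      (c l : ℂ) * (coordP1 (x l)).2 *
        ∏ m ∈ (Finset.univ.filter fun m : Φpos => c m ≠ 0).erase l, (coordP1 (x m)).1 = 0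

/-- The embedding of the Cartan subalgebra `Hom_ℚ(E, ℂ)` into `(ℙ¹)^{Φ⁺}`. -/
def embH {E : Type*} [AddCommGroup E] [Module ℚ E] (Φpos : Finset E)
    (f : E →ₗ[ℚ] ℂ) : Φpos → OnePoint ℂ :=
  fun l => ((f (l : E) : ℂ) : OnePoint ℂ)

/-- `Ψ` is a closed root subsystem of `Θ`. -/
def IsClosedSub {E : Type*} [AddCommGroup E] (Θ Ψ : Set E) : Prop :=
  Ψ ⊆ Θ ∧ (∀ l ∈ Ψ, -l ∈ Ψ) ∧ ∀ l ∈ Ψ, ∀ m ∈ Ψ, l + m ∈ Θ → l + m ∈ Ψ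

/-- The rank of a subset: the dimension of its `ℚ`-linear span. -/
def rankOf {E : Type*} [AddCommGroup E] [Module ℚ E] (Ψ : Set E) : ℕ :=
  Module.finrank ℚ (Submodule.span ℚ Ψ)

/-- `Ψ` is a maximal closed root subsystem of `Θ` of rank `m`. -/
def IsMaxClosedOfRank {E : Type*} [AddCommGroup E] [Module ℚ E] (Θ Ψ : Set E) (m : ℕ) : Prop :=
  IsClosedSub Θ Ψ ∧ rankOf Ψ = m ∧
    ∀ Ψ' : Set E, IsClosedSub Θ Ψ' → rankOf Ψ' = m → Ψ ⊆ Ψ' → Ψ' = Ψ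


/-- `Fin(x)`: the set of positive roots where `x` has a finite coordinate. -/
def finSet {E : Type*} [AddCommGroup E] [Module ℚ E] (Φpos : Finset E)
    (x : Φpos → OnePoint ℂ) : Set E :=
  {l : E | ∃ h : l ∈ Φpos, x ⟨l, h⟩ ≠ OnePoint.infty}

/-- The action of `f ∈ Hom_ℚ(E, ℂ)` on `(ℙ¹)^{Φ⁺}`:
`[x₀ : x₁] ↦ [x₀ : f(λ)·x₀ + x₁]` in the `λ`-coordinate, i.e. a finite coordinate `c`
becomes `f(λ) + c` and `∞` stays `∞`. -/
def actH {E : Type*} [AddCommGroup E] [Module ℚ E] (Φpos : Finset E)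
    (f : E →ₗ[ℚ] ℂ) (x : Φpos → OnePoint ℂ) : Φpos → OnePoint ℂ :=
  fun l => Option.map (fun c => f (l : E) + c) (x l)


/-!
For a relation `∑ c_λ λ = 0` supported in `Fin(x)`, the equation of `Z` says that the finite
coordinates of `x` satisfy the same relation; the action shifts them by `f(λ)`, which changes
nothing since `∑ c_λ f(λ) = 0`. So two points of `Z` with the same finite part differ on `Fin(x)`
by a function respecting every rational relation among these roots, and such a function extends
to some `f ∈ Hom_ℚ(E, ℂ)`. Writing a positive root `β` with `x_β = ∞` in terms of `Fin(x)` would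
leave the single term `-1` in the equation, so `Fin(x) = Ψ ∩ Φ⁺` for `Ψ = Span(Fin(x)) ∩ Φ`,
which is closed and, being cut out by a subspace, maximal among closed subsystems of its rank.
-/

open Finset

lemma coordP1_infty : coordP1 OnePoint.infty = (0, 1) := rfl

lemma coordP1_coe (c : ℂ) : coordP1 c = (1, c) := rfl

lemma coordP1_fst_eq_one {y : OnePoint ℂ} (hy : y ≠ OnePoint.infty) : (coordP1 y).1 = 1 := by
  induction y using OnePoint.rec with
  | infty => exact absurd rfl hy
  | coe c => rfl

lemma coordP1_map_add (a : ℂ) (y : OnePoint ℂ) :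
    coordP1 (Option.map (a + ·) y) = ((coordP1 y).1, a * (coordP1 y).1 + (coordP1 y).2) := by
  induction y using OnePoint.rec with
  | infty => show ((0 : ℂ), (1 : ℂ)) = (0, a * 0 + 1); simp
  | coe c => show ((1 : ℂ), a + c) = (1, a * 1 + c); simp

section SumMulProdErase

variable {ι R : Type*} [DecidableEq ι] [CommSemiring R] (s : Finset ι) (a b c : ι → R)

lemma sum_mul_prod_erase_of_forall_eq_one (ha : ∀ m ∈ s, a m = 1) :
    ∑ l ∈ s, c l * b l * ∏ m ∈ s.erase l, a m = ∑ l ∈ s, c l * b l :=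
  sum_congr rfl fun _ _ => by rw [prod_eq_one fun m hm => ha m (mem_of_mem_erase hm), mul_one]

lemma sum_mul_prod_erase_of_eq_zero {l₀ : ι} (hl₀ : l₀ ∈ s) (ha₀ : a l₀ = 0)
    (ha : ∀ m ∈ s, m ≠ l₀ → a m = 1) :
    ∑ l ∈ s, c l * b l * ∏ m ∈ s.erase l, a m = c l₀ * b l₀ := by
  rw [sum_eq_single_of_mem l₀ hl₀ fun l _ hl => by
      rw [prod_eq_zero (mem_erase.2 ⟨Ne.symm hl, hl₀⟩) ha₀, mul_zero],
    prod_eq_one fun m hm => ha m (mem_of_mem_erase hm) (ne_of_mem_erase hm), mul_one]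

lemma sum_mul_add_mul_prod_erase (e : ι → R) :
    ∑ l ∈ s, c l * (e l * a l + b l) * ∏ m ∈ s.erase l, a m =
      (∑ l ∈ s, c l * e l) * ∏ m ∈ s, a m + ∑ l ∈ s, c l * b l * ∏ m ∈ s.erase l, a m := by
  rw [sum_mul, ← sum_add_distrib]
  refine sum_congr rfl fun l hl => ?_
  rw [← mul_prod_erase s a hl]
  ring

end SumMulProdErase

section LinearExtension

variable {K U V W : Type*} [DivisionRing K] [AddCommGroup U] [Module K U] [AddCommGroup V]
  [Module K V] [AddCommGroup W] [Module K W]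

theorem LinearMap.exists_comp_eq_of_ker_le (T : U →ₗ[K] V) (D : U →ₗ[K] W)
    (h : LinearMap.ker T ≤ LinearMap.ker D) : ∃ g : V →ₗ[K] W, g ∘ₗ T = D := by
  obtain ⟨g, hg⟩ := LinearMap.exists_extend
    ((LinearMap.ker T).liftQ D h ∘ₗ T.quotKerEquivRange.symm.toLinearMap)
  exact ⟨g, LinearMap.ext fun u => by
    simpa using LinearMap.congr_fun hg ⟨T u, LinearMap.mem_range_self T u⟩⟩

theorem exists_linearMap_apply_eq_of_relations {ι : Type*} [Fintype ι] (s : Set ι)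
    (v : ι → V) (d : ι → W)
    (h : ∀ c : ι → K, (∀ i, c i ≠ 0 → i ∈ s) → ∑ i, c i • v i = 0 → ∑ i, c i • d i = 0) :
    ∃ f : V →ₗ[K] W, ∀ i ∈ s, f (v i) = d i := by
  classical
  obtain ⟨f, hf⟩ := (Fintype.linearCombination K (s.indicator v)).exists_comp_eq_of_ker_le
    (Fintype.linearCombination K (s.indicator d)) fun c hc => by
      simp only [LinearMap.mem_ker, Fintype.linearCombination_apply, ← Set.indicator_smul_apply,
        Set.indicator_smul_apply_left] at hc ⊢
      exact h _ (fun i hi => Set.mem_of_indicator_ne_zero hi) hc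
  refine ⟨f, fun i hi => ?_⟩
  simpa [Set.indicator_of_mem hi] using LinearMap.congr_fun hf (Pi.single i 1)

end LinearExtension

theorem isMaxClosedOfRank_submodule_inter {E : Type*} [AddCommGroup E] [Module ℚ E] {Θ : Set E}
    (hΘ : Θ.Finite) (hneg : ∀ α ∈ Θ, -α ∈ Θ) (W : Submodule ℚ E) :
    IsMaxClosedOfRank Θ (W ∩ Θ) (rankOf ((W : Set E) ∩ Θ)) := by
  refine ⟨⟨Set.inter_subset_right, fun l hl => ⟨W.neg_mem hl.1, hneg l hl.2⟩,
    fun l hl m hm hlm => ⟨W.add_mem hl.1 hm.1, hlm⟩⟩, rfl, fun Ψ' hΨ' hrank hsub => ?_⟩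
  have := FiniteDimensional.span_of_finite ℚ (hΘ.subset hΨ'.1)
  have hspan : Submodule.span ℚ ((W : Set E) ∩ Θ) = Submodule.span ℚ Ψ' :=
    Submodule.eq_of_le_of_finrank_eq (Submodule.span_mono hsub) hrank.symm
  refine Set.Subset.antisymm (fun e he => ⟨?_, hΨ'.1 he⟩) hsub
  exact Submodule.span_le.2 Set.inter_subset_left (hspan ▸ Submodule.subset_span he)

section PointsOfZ

variable {E : Type*} [AddCommGroup E] [Module ℚ E] {Φpos : Finset E}

lemma mem_finSet {x : Φpos → OnePoint ℂ} {l : Φpos} :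
    (l : E) ∈ finSet Φpos x ↔ x l ≠ OnePoint.infty :=
  ⟨fun ⟨_, h⟩ => h, fun h => ⟨l.2, h⟩⟩

lemma finSet_subset (x : Φpos → OnePoint ℂ) : finSet Φpos x ⊆ Φpos :=
  fun _ ⟨h, _⟩ => h

lemma finSet_eq_finSet_iff {x y : Φpos → OnePoint ℂ} :
    finSet Φpos x = finSet Φpos y ↔ ∀ l, x l = OnePoint.infty ↔ y l = OnePoint.infty := by
  refine ⟨fun h l => not_iff_not.1 ?_, fun h => Set.ext fun e => ?_⟩
  · rw [← Ne, ← Ne, ← mem_finSet, ← mem_finSet, h]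
  · exact ⟨fun ⟨he, hx⟩ => ⟨he, (not_congr (h ⟨e, he⟩)).1 hx⟩,
      fun ⟨he, hy⟩ => ⟨he, (not_congr (h ⟨e, he⟩)).2 hy⟩⟩

lemma actH_zero (x : Φpos → OnePoint ℂ) : actH Φpos 0 x = x := by
  funext l
  simp only [actH, LinearMap.zero_apply, zero_add]
  exact Option.map_id'

lemma actH_add (f g : E →ₗ[ℚ] ℂ) (x : Φpos → OnePoint ℂ) :
    actH Φpos (f + g) x = actH Φpos f (actH Φpos g x) := by
  funext l
  simp only [actH, LinearMap.add_apply, add_assoc]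
  exact (Option.map_map _ _ _).symm

lemma actH_eq_infty_iff (f : E →ₗ[ℚ] ℂ) (x : Φpos → OnePoint ℂ) (l : Φpos) :
    actH Φpos f x l = OnePoint.infty ↔ x l = OnePoint.infty :=
  Option.map_eq_none_iff

lemma actH_apply_of_eq_coe (f : E →ₗ[ℚ] ℂ) {x : Φpos → OnePoint ℂ} {l : Φpos} {u : ℂ}
    (hu : x l = u) : actH Φpos f x l = ↑(f l + u) := by
  simp only [actH, hu]
  rfl

lemma finSet_actH (f : E →ₗ[ℚ] ℂ) (x : Φpos → OnePoint ℂ) :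
    finSet Φpos (actH Φpos f x) = finSet Φpos x :=
  finSet_eq_finSet_iff.2 (actH_eq_infty_iff f x)

lemma memZ_actH (f : E →ₗ[ℚ] ℂ) {x : Φpos → OnePoint ℂ} (hx : memZ Φpos x) :
    memZ Φpos (actH Φpos f x) := by
  intro c hc
  have hf : ∑ l ∈ univ.filter fun l : Φpos => c l ≠ 0, (c l : ℂ) * f l = 0 := by
    rw [sum_filter_of_ne (p := fun l => c l ≠ 0) fun l _ h hl => h (by simp [hl])]
    simpa [← Rat.smul_def, map_sum] using congr_arg f hc
  simp only [actH, coordP1_map_add]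
  rw [sum_mul_add_mul_prod_erase, hf, zero_mul, zero_add]
  exact hx c hc

variable {x : Φpos → OnePoint ℂ}

lemma sum_mul_coordP1_eq_zero_of_memZ (hx : memZ Φpos x) {c : Φpos → ℚ}
    (hc : ∑ l, c l • (l : E) = 0) (hfin : ∀ l, c l ≠ 0 → x l ≠ OnePoint.infty) :
    ∑ l, (c l : ℂ) * (coordP1 (x l)).2 = 0 := by
  have hz := hx c hc
  rwa [sum_mul_prod_erase_of_forall_eq_one _ _ _ _
      fun m hm => coordP1_fst_eq_one (hfin m (mem_filter.1 hm).2),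
    sum_filter_of_ne (p := fun l => c l ≠ 0) fun l _ h hl => h (by simp [hl])] at hz

lemma ne_infty_of_mem_span_finSet (hx : memZ Φpos x) {β : Φpos}
    (hβ : (β : E) ∈ Submodule.span ℚ (finSet Φpos x)) : x β ≠ OnePoint.infty := by
  intro hinf
  obtain ⟨a, ha, hsum⟩ := Submodule.mem_span_set.1 hβ
  have haβ : a β = 0 :=
    Finsupp.notMem_support_iff.1 fun h => mem_finSet.1 (ha h) hinf
  -- the relation `∑ a_λ λ - β = 0`, in which `β` is the only root infinite at `x`
  let c : Φpos → ℚ := fun l => a l - if l = β then 1 else 0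
  have hc : ∑ l, c l • (l : E) = 0 := by
    have ha_sum : ∑ l : Φpos, a l • (l : E) = β := by
      rw [← hsum, Finsupp.sum_of_support_subset a (fun e he => finSet_subset x (ha he))
        (fun e r => r • e) fun _ _ => zero_smul _ _]
      exact sum_coe_sort Φpos fun e => a e • e
    simp only [c, sub_smul, sum_sub_distrib, ite_smul, one_smul, zero_smul, sum_ite_eq',
      mem_univ, if_true, ha_sum, sub_self]
  have hz := hx c hc
  rw [sum_mul_prod_erase_of_eq_zero _ _ _ _ (l₀ := β) (by simp [c, haβ])
      (by rw [hinf, coordP1_infty]) fun m hm hmβ => coordP1_fst_eq_one ?_] at hz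
  · simp [c, haβ, hinf, coordP1_infty] at hz
  · have hcm : c m ≠ 0 := (mem_filter.1 hm).2
    exact mem_finSet.1 (ha (Finsupp.mem_support_iff.2 (by simpa [c, hmβ] using hcm)))

lemma exists_actH_eq_iff {x' : Φpos → OnePoint ℂ} (hx : memZ Φpos x) (hx' : memZ Φpos x') :
    (∃ f : E →ₗ[ℚ] ℂ, actH Φpos f x = x') ↔ finSet Φpos x = finSet Φpos x' := by
  refine ⟨fun ⟨f, hf⟩ => hf ▸ (finSet_actH f x).symm, fun h => ?_⟩
  rw [finSet_eq_finSet_iff] at h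
  obtain ⟨f, hf⟩ := exists_linearMap_apply_eq_of_relations (K := ℚ)
    {l | x l ≠ OnePoint.infty} (fun l : Φpos => (l : E))
    (fun l => (coordP1 (x' l)).2 - (coordP1 (x l)).2)
    fun c hfin hc => by
      have hfin' : ∀ l, c l ≠ 0 → x' l ≠ OnePoint.infty :=
        fun l hl => (not_congr (h l)).1 (hfin l hl)
      simp only [Rat.smul_def, mul_sub, sum_sub_distrib, sub_eq_zero]
      rw [sum_mul_coordP1_eq_zero_of_memZ hx hc hfin,
        sum_mul_coordP1_eq_zero_of_memZ hx' hc hfin']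
  refine ⟨f, funext fun l => ?_⟩
  by_cases hl : x l = OnePoint.infty
  · rw [(actH_eq_infty_iff f x l).2 hl, (h l).1 hl]
  · obtain ⟨u, hu⟩ := OnePoint.ne_infty_iff_exists.1 hl
    obtain ⟨u', hu'⟩ := OnePoint.ne_infty_iff_exists.1 ((not_congr (h l)).1 hl)
    have hfl := hf l hl
    simp only [← hu, ← hu', coordP1_coe] at hfl
    rw [actH_apply_of_eq_coe f hu.symm, ← hu', hfl, sub_add_cancel]

lemma orbit_eq_stratum (hx : memZ Φpos x) :
    {y | ∃ f : E →ₗ[ℚ] ℂ, actH Φpos f x = y} =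
      {y | memZ Φpos y ∧ finSet Φpos y = finSet Φpos x} :=
  Set.ext fun _ => ⟨fun ⟨f, hf⟩ => hf ▸ ⟨memZ_actH f hx, finSet_actH f x⟩,
    fun ⟨hy, hfin⟩ => (exists_actH_eq_iff hx hy).2 hfin.symm⟩

lemma span_finSet_inter_inter_eq (hx : memZ Φpos x) {Φ : Set E} (hΦ : (Φpos : Set E) ⊆ Φ) :
    (Submodule.span ℚ (finSet Φpos x) : Set E) ∩ Φ ∩ Φpos = finSet Φpos x := by
  ext e
  refine ⟨fun ⟨⟨hspan, _⟩, he⟩ =>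
    mem_finSet.2 (ne_infty_of_mem_span_finSet hx (β := ⟨e, he⟩) hspan),
    fun he => ⟨⟨Submodule.subset_span he, hΦ (finSet_subset x he)⟩, finSet_subset x he⟩⟩

lemma finite_setOf_orbits :
    {S | ∃ x, memZ Φpos x ∧ S = {y | ∃ f : E →ₗ[ℚ] ℂ, actH Φpos f x = y}}.Finite := by
  refine (Φpos.finite_toSet.powerset.image fun A =>
    {y | memZ Φpos y ∧ finSet Φpos y = A}).subset ?_
  rintro S ⟨x, hx, rfl⟩
  exact ⟨finSet Φpos x, finSet_subset x, (orbit_eq_stratum hx).symm⟩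

end PointsOfZ

theorem statement6_general {E : Type*} [AddCommGroup E] [Module ℚ E]
    (Φ : Set E) (hΦ : IsRootSystem Φ)
    (ℓ : E →ₗ[ℚ] ℚ)
    (Φpos : Finset E) (hpos : ∀ a : E, a ∈ Φpos ↔ a ∈ Φ ∧ 0 < ℓ a) :
    -- the formula defines an action of the additive group `Hom_ℚ(E, ℂ)`
    (∀ x : Φpos → OnePoint ℂ, actH Φpos 0 x = x) ∧
    (∀ (f g : E →ₗ[ℚ] ℂ) (x : Φpos → OnePoint ℂ),
      actH Φpos (f + g) x = actH Φpos f (actH Φpos g x)) ∧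
    -- `Z` is invariant
    (∀ (f : E →ₗ[ℚ] ℂ) (x : Φpos → OnePoint ℂ), memZ Φpos x → memZ Φpos (actH Φpos f x)) ∧
    -- two points of `Z` lie in the same orbit iff they have the same finite part
    (∀ x x' : Φpos → OnePoint ℂ, memZ Φpos x → memZ Φpos x' →
      ((∃ f : E →ₗ[ℚ] ℂ, actH Φpos f x = x') ↔ finSet Φpos x = finSet Φpos x')) ∧
    -- the orbits are the strata indexed by maximal closed root subsystems
    (∀ x : Φpos → OnePoint ℂ, memZ Φpos x → ∃ Ψ : Set E,
      IsMaxClosedOfRank Φ Ψ (rankOf Ψ) ∧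
      {y : Φpos → OnePoint ℂ | ∃ f : E →ₗ[ℚ] ℂ, actH Φpos f x = y}
        = {y : Φpos → OnePoint ℂ | memZ Φpos y ∧ finSet Φpos y = Ψ ∩ (Φpos : Set E)}) ∧
    -- in particular, there are only finitely many orbits in `Z`
    Set.Finite {S : Set (Φpos → OnePoint ℂ) |
      ∃ x : Φpos → OnePoint ℂ, memZ Φpos x ∧
        S = {y : Φpos → OnePoint ℂ | ∃ f : E →ₗ[ℚ] ℂ, actH Φpos f x = y}} := by
  obtain ⟨hΦfin, -, -, hΦneg, -⟩ := hΦ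
  have hΦpos : (Φpos : Set E) ⊆ Φ := fun a ha => ((hpos a).1 ha).1
  refine ⟨actH_zero, actH_add, fun f _ hx => memZ_actH f hx, fun _ _ => exists_actH_eq_iff,
    fun x hx => ⟨_,
      isMaxClosedOfRank_submodule_inter hΦfin hΦneg (Submodule.span ℚ (finSet Φpos x)), ?_⟩,
    finite_setOf_orbits⟩
  rw [orbit_eq_stratum hx, span_finSet_inter_inter_eq hx hΦpos]

theorem statement6 {E : Type*} [AddCommGroup E] [Module ℚ E] [FiniteDimensional ℚ E]
    (hr : 1 ≤ Module.finrank ℚ E)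
    (Φ : Set E) (hΦ : IsRootSystem Φ)
    (ℓ : E →ₗ[ℚ] ℚ) (hℓ : ∀ α ∈ Φ, ℓ α ≠ 0)
    (Φpos : Finset E) (hpos : ∀ a : E, a ∈ Φpos ↔ a ∈ Φ ∧ 0 < ℓ a) :
    -- the formula defines an action of the additive group `Hom_ℚ(E, ℂ)`
    (∀ x : Φpos → OnePoint ℂ, actH Φpos 0 x = x) ∧
    (∀ (f g : E →ₗ[ℚ] ℂ) (x : Φpos → OnePoint ℂ),
      actH Φpos (f + g) x = actH Φpos f (actH Φpos g x)) ∧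
    -- `Z` is invariant
    (∀ (f : E →ₗ[ℚ] ℂ) (x : Φpos → OnePoint ℂ), memZ Φpos x → memZ Φpos (actH Φpos f x)) ∧
    -- two points of `Z` lie in the same orbit iff they have the same finite part
    (∀ x x' : Φpos → OnePoint ℂ, memZ Φpos x → memZ Φpos x' →
      ((∃ f : E →ₗ[ℚ] ℂ, actH Φpos f x = x') ↔ finSet Φpos x = finSet Φpos x')) ∧
    -- the orbits are the strata indexed by maximal closed root subsystems
    (∀ x : Φpos → OnePoint ℂ, memZ Φpos x → ∃ Ψ : Set E,
      IsMaxClosedOfRank Φ Ψ (rankOf Ψ) ∧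
      {y : Φpos → OnePoint ℂ | ∃ f : E →ₗ[ℚ] ℂ, actH Φpos f x = y}
        = {y : Φpos → OnePoint ℂ | memZ Φpos y ∧ finSet Φpos y = Ψ ∩ (Φpos : Set E)}) ∧
    -- in particular, there are only finitely many orbits in `Z`
    Set.Finite {S : Set (Φpos → OnePoint ℂ) |
      ∃ x : Φpos → OnePoint ℂ, memZ Φpos x ∧
        S = {y : Φpos → OnePoint ℂ | ∃ f : E →ₗ[ℚ] ℂ, actH Φpos f x = y}} :=
  statement6_general Φ hΦ ℓ Φpos hpos
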